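/- arXiv:2105.13081 — 5 statements merged into one kernel-verified Lean document; each statement's English description precedes it below -/
import Mathlib

section
/- Let φ>0 and r∈(0,1). For every z₁>0, the Kibble bivariate gamma density integrates in its second argument to a gamma density: ∫₀^∞ g_{φ,r}(z₁,z₂) dz₂ = φ^φ · z₁^{φ−1} · exp(−φz₁) / Γ(φ). In particular, each marginal of the Kibble bivariate gamma distribution is the gamma distribution with rate φ and shape φ (mean 1 and variance 1/φ). -/
/-!
Expanding the Bessel series shows that the Kibble density is a negative-binomial mixture of
products of gamma densities: with `c = φ / (1 - r)`,
`g(z₁, z₂) = ∑ₖ NB_{φ,r}(k) · Gamma(c, φ + k)(z₁) · Gamma(c, φ + k)(z₂)`.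
All terms are nonnegative, so `z₂` can be integrated out termwise, leaving
`∑ₖ NB_{φ,r}(k) · Gamma(c, φ + k)(z₁)`. Each summand factors as `Gamma(φ, φ)(z₁)` times the
Poisson weight `e^{-x} xᵏ / k!` with `x = r c z₁`, so the series sums to `Gamma(φ, φ)(z₁)`.
-/

open MeasureTheory Real Set

/-- Modified Bessel function of the first kind (series form). -/
noncomputable def besselI (α x : ℝ) : ℝ :=
  ∑' k : ℕ, (x / 2) ^ (2 * (k : ℝ) + α) / (Real.Gamma ((k : ℝ) + α + 1) * (Nat.factorial k : ℝ))

/-- Gamma density with rate `γ` and shape `α`. -/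
noncomputable def gammaPdf (γ α z : ℝ) : ℝ :=
  γ ^ α * z ^ (α - 1) * Real.exp (-γ * z) / Real.Gamma α

/-- Kibble bivariate gamma density with parameters `φ > 0` and `r ∈ (0,1)`. -/
noncomputable def kibble (φ r z₁ z₂ : ℝ) : ℝ :=
  φ ^ (φ + 1) / ((1 - r) * Real.Gamma φ) * (z₁ * z₂ / r) ^ ((φ - 1) / 2) *
    Real.exp (-φ * (z₁ + z₂) / (1 - r)) *
    besselI (φ - 1) (2 * φ * Real.sqrt (r * z₁ * z₂) / (1 - r))

/-- Conditional normal density of the NSVt model given latent `z`: `N(μ, σ²/z)`. -/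
noncomputable def normCond (σ μ y z : ℝ) : ℝ :=
  Real.sqrt z / (Real.sqrt (2 * Real.pi) * σ) * Real.exp (-z * (y - μ) ^ 2 / (2 * σ ^ 2))

/-- Student-t density with `ν` degrees of freedom, location `μ` and scale `σ`. -/
noncomputable def studentTPdf (ν μ σ y : ℝ) : ℝ :=
  Real.Gamma ((ν + 1) / 2) / (Real.Gamma (ν / 2) * Real.sqrt (Real.pi * ν) * σ) *
    (1 + (y - μ) ^ 2 / (ν * σ ^ 2)) ^ (-(ν + 1) / 2)

/-- Gauss hypergeometric series `₂F₁(a₁,a₂;b;x)`. -/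
noncomputable def hyp2F1 (a₁ a₂ b x : ℝ) : ℝ :=
  ∑' k : ℕ, Real.Gamma ((k : ℝ) + a₁) * Real.Gamma ((k : ℝ) + a₂) * Real.Gamma b /
    (Real.Gamma a₁ * Real.Gamma a₂ * Real.Gamma ((k : ℝ) + b)) * x ^ k / (Nat.factorial k : ℝ)

/-- Confluent hypergeometric (Kummer) series `₁F₁(a;b;x)`. -/
noncomputable def hyp1F1 (a b x : ℝ) : ℝ :=
  ∑' k : ℕ, Real.Gamma ((k : ℝ) + a) * Real.Gamma b /
    (Real.Gamma a * Real.Gamma ((k : ℝ) + b)) * x ^ k / (Nat.factorial k : ℝ)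

/-- Generalized Laguerre polynomial of degree `n` with parameter `α`. -/
noncomputable def laguerreL (n : ℕ) (α x : ℝ) : ℝ :=
  ∑ i ∈ Finset.range (n + 1),
    (-1 : ℝ) ^ i * Real.Gamma ((n : ℝ) + α + 1) /
      (Real.Gamma (α + (i : ℝ) + 1) * (Nat.factorial (n - i) : ℝ) * (Nat.factorial i : ℝ)) * x ^ i

/-- Negative binomial pmf with parameters `φ > 0` and `r ∈ (0,1)`. -/
noncomputable def nbinomPmf (φ r : ℝ) (u : ℕ) : ℝ :=
  Real.Gamma (φ + u) / (Real.Gamma φ * (Nat.factorial u : ℝ)) * (1 - r) ^ φ * r ^ u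

/-- The quantity `ω(y₁,y₂)` appearing in the pairwise joint density of the NSVt model. -/
noncomputable def omegaFn (ν σ r μ₁ μ₂ y₁ y₂ : ℝ) : ℝ :=
  ((1 + (1 - r) * (y₁ - μ₁) ^ 2 / (ν * σ ^ 2)) *
    (1 + (1 - r) * (y₂ - μ₂) ^ 2 / (ν * σ ^ 2)))⁻¹

/-- Pairwise joint density of the NSVt model (with `r = ρʲ`). -/
noncomputable def pairDensity (ν σ r μ₁ μ₂ y₁ y₂ : ℝ) : ℝ :=
  (1 - r) ^ (ν / 2 + 1) / (Real.pi * ν * σ ^ 2) *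
    (Real.Gamma ((ν + 1) / 2) / Real.Gamma (ν / 2)) ^ 2 *
    omegaFn ν σ r μ₁ μ₂ y₁ y₂ ^ ((ν + 1) / 2) *
    hyp2F1 ((ν + 1) / 2) ((ν + 1) / 2) (ν / 2) (r * omegaFn ν σ r μ₁ μ₂ y₁ y₂)

lemma gammaPdf_nonneg {γ α z : ℝ} (hγ : 0 ≤ γ) (hα : 0 ≤ α) (hz : 0 ≤ z) :
    0 ≤ gammaPdf γ α z := by
  have := Gamma_nonneg_of_nonneg hα
  unfold gammaPdf
  positivity

lemma integral_gammaPdf_Ioi {γ α : ℝ} (hγ : 0 < γ) (hα : 0 < α) :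
    ∫ z in Ioi 0, gammaPdf γ α z = 1 := by
  have hpdf : gammaPdf γ α = fun z ↦ γ ^ α / Gamma α * (z ^ (α - 1) * exp (-(γ * z))) := by
    funext z
    simp only [gammaPdf, neg_mul]
    ring
  have hΓ : Gamma α ≠ 0 := (Gamma_pos_of_pos hα).ne'
  have hγα : γ ^ α ≠ 0 := (rpow_pos_of_pos hγ α).ne'
  rw [hpdf, integral_const_mul, integral_rpow_mul_exp_neg_mul_Ioi hα hγ, one_div,
    inv_rpow hγ.le]
  field_simp

lemma integrableOn_gammaPdf_Ioi {γ α : ℝ} (hγ : 0 < γ) (hα : 0 < α) :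
    IntegrableOn (gammaPdf γ α) (Ioi 0) :=
  Integrable.of_integral_ne_zero (by simp [integral_gammaPdf_Ioi hγ hα])

lemma nbinomPmf_nonneg {φ r : ℝ} (hφ : 0 ≤ φ) (hr₀ : 0 ≤ r) (hr₁ : r ≤ 1) (k : ℕ) :
    0 ≤ nbinomPmf φ r k := by
  have := Gamma_nonneg_of_nonneg hφ
  have := Gamma_nonneg_of_nonneg (by positivity : 0 ≤ φ + k)
  have : 0 ≤ 1 - r := by linarith
  unfold nbinomPmf
  positivity

lemma nbinomPmf_mul_gammaPdf {φ r z : ℝ} (hφ : 0 < φ) (hr₀ : 0 < r) (hr₁ : r < 1) (hz : 0 < z)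
    (k : ℕ) :
    nbinomPmf φ r k * gammaPdf (φ / (1 - r)) (φ + k) z =
      gammaPdf φ φ z * exp (-(r * φ * z / (1 - r))) *
        ((r * φ * z / (1 - r)) ^ k / (Nat.factorial k : ℝ)) := by
  unfold nbinomPmf gammaPdf
  have hu : 0 < 1 - r := by linarith
  set u := 1 - r with hu_def
  -- both sides are positive products of powers, so it suffices to compare logarithms
  apply log_injOn_pos (mem_Ioi.2 (by positivity)) (mem_Ioi.2 (by positivity))
  simp (disch := positivity) only [log_mul, log_div, log_rpow, log_pow, log_exp]
  field_simp
  rw [hu_def]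
  ring

lemma hasSum_nbinomPmf_mul_gammaPdf {φ r z : ℝ} (hφ : 0 < φ) (hr₀ : 0 < r) (hr₁ : r < 1)
    (hz : 0 < z) :
    HasSum (fun k : ℕ ↦ nbinomPmf φ r k * gammaPdf (φ / (1 - r)) (φ + k) z) (gammaPdf φ φ z) := by
  simp only [nbinomPmf_mul_gammaPdf hφ hr₀ hr₁ hz]
  set x := r * φ * z / (1 - r)
  have h := (NormedSpace.expSeries_div_hasSum_exp x).mul_left (gammaPdf φ φ z * exp (-x))
  rwa [← exp_eq_exp_ℝ, mul_assoc, ← exp_add, neg_add_cancel, exp_zero, mul_one] at h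

lemma kibble_eq_tsum {φ r z₁ z₂ : ℝ} (hφ : 0 < φ) (hr₀ : 0 < r) (hr₁ : r < 1) (hz₁ : 0 < z₁)
    (hz₂ : 0 < z₂) :
    kibble φ r z₁ z₂ = ∑' k : ℕ, nbinomPmf φ r k *
      gammaPdf (φ / (1 - r)) (φ + k) z₁ * gammaPdf (φ / (1 - r)) (φ + k) z₂ := by
  unfold kibble besselI
  rw [← tsum_mul_left]
  refine tsum_congr fun k ↦ ?_
  unfold nbinomPmf gammaPdf
  have hu : 0 < 1 - r := by linarith
  set u := 1 - r with hu_def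
  rw [show (k : ℝ) + (φ - 1) + 1 = φ + k by ring]
  apply log_injOn_pos (mem_Ioi.2 (by positivity)) (mem_Ioi.2 (by positivity))
  simp (disch := positivity) only [log_mul, log_div, log_rpow, log_pow, log_exp, log_sqrt]
  field_simp
  rw [hu_def]
  ring

/-- each marginal of the Kibble bivariate gamma is Gamma(rate φ, shape φ). -/
theorem kibble_marginal (φ r : ℝ) (hφ : 0 < φ) (hr : r ∈ Set.Ioo (0 : ℝ) 1) :
    ∀ z₁ : ℝ, 0 < z₁ →
      (∫ z₂ in Set.Ioi (0 : ℝ), kibble φ r z₁ z₂) =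
        φ ^ φ * z₁ ^ (φ - 1) * Real.exp (-φ * z₁) / Real.Gamma φ := by
  obtain ⟨hr₀, hr₁⟩ := hr
  intro z₁ hz₁
  set c := φ / (1 - r)
  have hc : 0 < c := div_pos hφ (by linarith)
  set F : ℕ → ℝ → ℝ := fun k z₂ ↦ nbinomPmf φ r k * gammaPdf c (φ + k) z₁ * gammaPdf c (φ + k) z₂
  have hF_int : ∀ k, IntegrableOn (F k) (Ioi 0) := fun k ↦
    (integrableOn_gammaPdf_Ioi hc (by positivity)).const_mul _
  have hF_integral : ∀ k, ∫ z₂ in Ioi 0, F k z₂ = nbinomPmf φ r k * gammaPdf c (φ + k) z₁ := by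
    intro k
    rw [integral_const_mul, integral_gammaPdf_Ioi hc (by positivity), mul_one]
  have hF_norm : ∀ k, ∫ z₂ in Ioi 0, ‖F k z₂‖ = ∫ z₂ in Ioi 0, F k z₂ := fun k ↦
    setIntegral_congr_fun measurableSet_Ioi fun z₂ hz₂ ↦ norm_of_nonneg <|
      mul_nonneg (mul_nonneg (nbinomPmf_nonneg hφ.le hr₀.le hr₁.le k)
        (gammaPdf_nonneg hc.le (by positivity) hz₁.le))
        (gammaPdf_nonneg hc.le (by positivity) (le_of_lt hz₂))
  have hsum := hasSum_nbinomPmf_mul_gammaPdf hφ hr₀ hr₁ hz₁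
  have hsum_int := hasSum_integral_of_summable_integral_norm hF_int
    (hsum.summable.congr fun k ↦ by rw [hF_norm, hF_integral])
  rw [setIntegral_congr_fun measurableSet_Ioi fun z₂ hz₂ ↦ kibble_eq_tsum hφ hr₀ hr₁ hz₁ hz₂,
    ← hsum_int.tsum_eq]
  simp only [hF_integral]
  exact hsum.tsum_eq
end

section
/- Let φ>0 and r∈(0,1). For all z₁,z₂>0, the Kibble bivariate gamma density admits the negative binomial mixture representation g_{φ,r}(z₁,z₂) = ∑_{u=0}^∞ [Γ(φ+u)/(Γ(φ)·u!) · (1−r)^φ · r^u] · γ_{φ/(1−r),φ+u}(z₁) · γ_{φ/(1−r),φ+u}(z₂), where γ_{γ,α} denotes the gamma density with rate γ and shape α. That is, a Kibble bivariate gamma pair (Z₁,Z₂) satisfies Z₁,Z₂ | U=u i.i.d. Gamma(rate φ/(1−r), shape φ+u) with U negative binomial. -/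
open MeasureTheory Real Set

private lemma kibble_term_eq (φ r z₁ z₂ : ℝ) (hφ : 0 < φ) (hr0 : 0 < r) (hr1 : r < 1)
    (h₁ : 0 < z₁) (h₂ : 0 < z₂) (u : ℕ) :
    φ ^ (φ + 1) / ((1 - r) * Real.Gamma φ) * (z₁ * z₂ / r) ^ ((φ - 1) / 2) *
      Real.exp (-φ * (z₁ + z₂) / (1 - r)) *
      ((2 * φ * Real.sqrt (r * z₁ * z₂) / (1 - r) / 2) ^ (2 * (u : ℝ) + (φ - 1)) /
        (Real.Gamma ((u : ℝ) + (φ - 1) + 1) * (Nat.factorial u : ℝ))) =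
    (Real.Gamma (φ + u) / (Real.Gamma φ * (Nat.factorial u : ℝ)) * (1 - r) ^ φ * r ^ u) *
      ((φ / (1 - r)) ^ (φ + (u:ℝ)) * z₁ ^ (φ + (u:ℝ) - 1) * Real.exp (-(φ / (1 - r)) * z₁) /
        Real.Gamma (φ + (u:ℝ))) *
      ((φ / (1 - r)) ^ (φ + (u:ℝ)) * z₂ ^ (φ + (u:ℝ) - 1) * Real.exp (-(φ / (1 - r)) * z₂) /
        Real.Gamma (φ + (u:ℝ))) := by
  have hs : 0 < 1 - r := by linarith
  have hΓeq : Real.Gamma ((u : ℝ) + (φ - 1) + 1) = Real.Gamma (φ + u) := by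
    rw [show ((u : ℝ) + (φ - 1) + 1) = φ + u by ring]
  have hx : 2 * φ * Real.sqrt (r * z₁ * z₂) / (1 - r) / 2
      = (r * z₁ * z₂) ^ ((1:ℝ)/2) * φ / (1 - r) := by
    rw [Real.sqrt_eq_rpow]; ring
  rw [hΓeq, hx]
  have hΓu : 0 < Real.Gamma (φ + u) := Real.Gamma_pos_of_pos (by positivity)
  have hL : 0 < φ ^ (φ + 1) / ((1 - r) * Real.Gamma φ) * (z₁ * z₂ / r) ^ ((φ - 1) / 2) *
      Real.exp (-φ * (z₁ + z₂) / (1 - r)) *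
      (((r * z₁ * z₂) ^ ((1:ℝ)/2) * φ / (1 - r)) ^ (2 * (u : ℝ) + (φ - 1)) /
        (Real.Gamma (φ + u) * (Nat.factorial u : ℝ))) := by positivity
  have hR : 0 < (Real.Gamma (φ + u) / (Real.Gamma φ * (Nat.factorial u : ℝ)) * (1 - r) ^ φ * r ^ u) *
      ((φ / (1 - r)) ^ (φ + (u:ℝ)) * z₁ ^ (φ + (u:ℝ) - 1) * Real.exp (-(φ / (1 - r)) * z₁) /
        Real.Gamma (φ + (u:ℝ))) *
      ((φ / (1 - r)) ^ (φ + (u:ℝ)) * z₂ ^ (φ + (u:ℝ) - 1) * Real.exp (-(φ / (1 - r)) * z₂) /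
        Real.Gamma (φ + (u:ℝ))) := by positivity
  rw [← Real.exp_log hL, ← Real.exp_log hR]
  congr 1
  have hΓφ : 0 < Real.Gamma φ := Real.Gamma_pos_of_pos hφ
  have hfac : (0:ℝ) < (Nat.factorial u : ℝ) := by positivity
  rw [Real.log_mul (by positivity) (by positivity), Real.log_mul (by positivity) (by positivity),
    Real.log_mul (by positivity) (by positivity), Real.log_div (by positivity) (by positivity),
    Real.log_mul (by positivity) (by positivity), Real.log_rpow hφ,
    Real.log_rpow (by positivity), Real.log_div (by positivity) (by positivity),
    Real.log_mul (by positivity) (by positivity), Real.log_exp,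
    Real.log_div (by positivity) (by positivity), Real.log_rpow (by positivity),
    Real.log_mul (by positivity) (by positivity)]
  have hru : (0:ℝ) < r * z₁ * z₂ := by positivity
  have eI : Real.log ((r*z₁*z₂) ^ ((1:ℝ)/2) * φ / (1-r))
      = (1/2)*(Real.log r + Real.log z₁ + Real.log z₂) + Real.log φ - Real.log (1-r) := by
    rw [Real.log_div (by positivity) hs.ne', Real.log_mul (by positivity) hφ.ne',
      Real.log_rpow hru, Real.log_mul (by positivity) h₂.ne', Real.log_mul hr0.ne' h₁.ne']
  have eG : ∀ z : ℝ, 0 < z →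
      Real.log ((φ/(1-r))^(φ+(u:ℝ)) * z^(φ+(u:ℝ)-1) * Real.exp (-(φ/(1-r))*z) /
        Real.Gamma (φ+(u:ℝ)))
      = (φ+(u:ℝ))*(Real.log φ - Real.log (1-r)) + (φ+(u:ℝ)-1)*Real.log z +
        (-(φ/(1-r))*z) - Real.log (Real.Gamma (φ+(u:ℝ))) := by
    intro z hz
    rw [Real.log_div (by positivity) hΓu.ne', Real.log_mul (by positivity) (Real.exp_ne_zero _),
      Real.log_mul (by positivity) (by positivity), Real.log_rpow (by positivity),
      Real.log_rpow hz, Real.log_exp, Real.log_div hφ.ne' hs.ne']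
  have eN : Real.log (Real.Gamma (φ+(u:ℝ)) / (Real.Gamma φ * (Nat.factorial u:ℝ)) * (1-r)^φ * r^u)
      = Real.log (Real.Gamma (φ+(u:ℝ))) - (Real.log (Real.Gamma φ) + Real.log (Nat.factorial u:ℝ))
        + φ * Real.log (1-r) + u * Real.log r := by
    rw [Real.log_mul (by positivity) (by positivity), Real.log_mul (by positivity) (by positivity),
      Real.log_div (by positivity) (by positivity), Real.log_mul (by positivity) (by positivity),
      Real.log_rpow hs, Real.log_pow]
  rw [eI, Real.log_mul (by positivity) (by positivity),
    Real.log_mul (by positivity) (by positivity), eG z₁ h₁, eG z₂ h₂, eN]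
  ring

/-- negative binomial mixture representation of the Kibble bivariate gamma
density. -/
theorem kibble_nbinom_mixture (φ r : ℝ) (hφ : 0 < φ) (hr : r ∈ Set.Ioo (0 : ℝ) 1)
    (z₁ z₂ : ℝ) (h₁ : 0 < z₁) (h₂ : 0 < z₂) :
    kibble φ r z₁ z₂ =
      ∑' u : ℕ, nbinomPmf φ r u * gammaPdf (φ / (1 - r)) (φ + u) z₁ *
        gammaPdf (φ / (1 - r)) (φ + u) z₂ := by
  unfold kibble besselI nbinomPmf gammaPdf
  rw [← tsum_mul_left]
  exact tsum_congr fun u => kibble_term_eq φ r z₁ z₂ hφ hr.1 hr.2 h₁ h₂ u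
end

section
/- Let ν>0, σ²>0, r∈(0,1) and μ₁,μ₂∈ℝ, and let f_J(y₁,y₂) = ((1−r)^{ν/2+1}/(πνσ²)) · (Γ((ν+1)/2)/Γ(ν/2))² · ω(y₁,y₂)^{(ν+1)/2} · ₂F₁((ν+1)/2, (ν+1)/2; ν/2; r·ω(y₁,y₂)) denote the pairwise joint density of the NSVt model. Then for every y₂∈ℝ, ∫_ℝ f_J(y₁,y₂) dy₁ = t_{ν,μ₂,σ}(y₂); that is, the marginals of the pairwise joint density are the Student-t density with ν degrees of freedom, location μ₂ and scale σ. -/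
open MeasureTheory Real Set

/-!
Expanding `₂F₁` termwise, the `k`-th term of `f_J(·, y₂)` is a multiple of
`(1 + c (y₁ - μ₁)²)^(-(a + k))` with `a = (ν + 1)/2` and `c = (1 - r)/(νσ²)`; its integral in `y₁`
is `√(π/c) Γ(a + k - 1/2) / Γ(a + k)` (write `Γ(s) A^(-s)` as a Gamma integral and swap with the
Gaussian integral). As `a - 1/2 = ν/2` is the lower parameter of `₂F₁`, this cancels one Gamma
ratio, and what remains is the binomial series `∑ Γ(k + a) xᵏ / k! = Γ(a) (1 - x)^(-a)` at
`x = r / (1 + (1 - r)(y₂ - μ₂)²/(νσ²))`. Collecting the constants gives the Student-t density.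
-/

open scoped Nat

namespace Real

theorem Gamma_nat_add_div_Gamma {a : ℝ} (ha : 0 < a) (n : ℕ) :
    Gamma (n + a) / Gamma a = (ascPochhammer ℝ n).eval a := by
  induction n with
  | zero => simp [(Gamma_pos_of_pos ha).ne']
  | succ n ih =>
    rw [ascPochhammer_succ_eval, ← ih, Nat.cast_succ, add_right_comm,
      Gamma_add_one (by positivity)]
    ring

theorem ringChoose_add_sub_one_eq {a : ℝ} (ha : 0 < a) (n : ℕ) :
    Ring.choose (a + n - 1) n = Gamma (n + a) / (Gamma a * n !) := by
  rw [Ring.choose_eq_smul, Polynomial.descPochhammer_smeval_eq_ascPochhammer,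
    Polynomial.ascPochhammer_smeval_eq_eval, show a + n - 1 - n + 1 = a by ring,
    ← Gamma_nat_add_div_Gamma ha, smul_eq_mul]
  ring

theorem hasSum_Gamma_add_mul_pow_div_factorial {a x : ℝ} (ha : 0 < a) (hx : |x| < 1) :
    HasSum (fun n : ℕ => Gamma (n + a) * x ^ n / n !) (Gamma a * (1 - x) ^ (-a)) := by
  have hx' : x ∈ Metric.eball (0 : ℝ) 1 := by
    simpa [Metric.mem_eball, edist_dist, dist_eq] using hx
  have h := (one_div_one_sub_rpow_hasFPowerSeriesOnBall_zero a).hasSum hx'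
  simp only [FormalMultilinearSeries.ofScalars_apply_eq, zero_add, smul_eq_mul] at h
  have hcoeff : (fun n : ℕ => Gamma (n + a) * x ^ n / n !)
      = fun n : ℕ => Gamma a * (Ring.choose (a + n - 1) n * x ^ n) := by
    ext n
    rw [ringChoose_add_sub_one_eq ha]
    field_simp [(Gamma_pos_of_pos ha).ne']
  rw [hcoeff, rpow_neg (by linarith [le_abs_self x]), ← one_div]
  exact h.mul_left _

theorem Gamma_mul_rpow_neg_eq_integral {s A : ℝ} (hs : 0 < s) (hA : 0 < A) :
    Gamma s * A ^ (-s) = ∫ t in Ioi 0, t ^ (s - 1) * rexp (-(A * t)) := by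
  rw [integral_rpow_mul_exp_neg_mul_Ioi hs hA, one_div, inv_rpow hA.le, ← rpow_neg hA.le,
    mul_comm]

end Real

theorem rpow_mul_exp_neg_one_add_sq_mul (s t x : ℝ) :
    t ^ (s - 1) * rexp (-((1 + x ^ 2) * t)) = t ^ (s - 1) * rexp (-t) * rexp (-t * x ^ 2) := by
  rw [mul_assoc, ← exp_add]
  ring_nf

theorem integral_rpow_mul_exp_neg_one_add_sq_mul {s t : ℝ} (ht : 0 < t) :
    ∫ x : ℝ, t ^ (s - 1) * rexp (-((1 + x ^ 2) * t))
      = √π * (rexp (-t) * t ^ (s - 1 / 2 - 1)) := by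
  have hpow : t ^ (s - 1) = t ^ (s - 1 / 2 - 1) * √t := by
    rw [sqrt_eq_rpow, ← rpow_add ht]
    ring_nf
  simp_rw [rpow_mul_exp_neg_one_add_sq_mul]
  rw [integral_const_mul, integral_gaussian, sqrt_div' _ ht.le, hpow]
  field_simp

theorem integrable_one_add_sq_rpow_neg {s : ℝ} (hs : 1 / 2 < s) :
    Integrable fun x : ℝ => (1 + x ^ 2) ^ (-s) := by
  simpa [neg_div] using integrable_rpow_neg_one_add_norm_sq (E := ℝ) (μ := volume) (r := 2 * s)
    (by simp; linarith)

theorem integral_one_add_sq_rpow_neg {s : ℝ} (hs : 1 / 2 < s) :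
    ∫ x : ℝ, (1 + x ^ 2) ^ (-s) = √π * Gamma (s - 1 / 2) / Gamma s := by
  have hs0 : 0 < s := by linarith
  have hs1 : 0 < s - 1 / 2 := by linarith
  set F : ℝ → ℝ → ℝ := fun x t => t ^ (s - 1) * rexp (-((1 + x ^ 2) * t))
  have hF_t : ∀ x, ∫ t in Ioi 0, F x t = Gamma s * (1 + x ^ 2) ^ (-s) := fun x =>
    (Gamma_mul_rpow_neg_eq_integral hs0 (by positivity)).symm
  have hF_x : ∀ t ∈ Ioi (0 : ℝ), ∫ x, F x t = √π * (rexp (-t) * t ^ (s - 1 / 2 - 1)) :=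
    fun t ht => integral_rpow_mul_exp_neg_one_add_sq_mul ht
  have hF : Integrable (Function.uncurry F) (volume.prod (volume.restrict (Ioi 0))) := by
    rw [integrable_prod_iff' (by fun_prop)]
    refine ⟨ae_restrict_of_forall_mem measurableSet_Ioi fun t ht => ?_, ?_⟩
    · simp only [Function.uncurry_apply_pair, F, rpow_mul_exp_neg_one_add_sq_mul]
      exact (integrable_exp_neg_mul_sq ht).const_mul _
    · refine IntegrableOn.congr_fun ((GammaIntegral_convergent hs1).const_mul √π)
        (fun t (ht : 0 < t) => ?_) measurableSet_Ioi
      rw [← hF_x t ht]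
      exact integral_congr_ae (ae_of_all _ fun x => (norm_of_nonneg (by positivity)).symm)
  have hswap := integral_integral_swap hF
  rw [setIntegral_congr_fun measurableSet_Ioi hF_x, integral_const_mul,
    ← Gamma_eq_integral hs1] at hswap
  simp only [hF_t, integral_const_mul] at hswap
  rw [eq_div_iff (Gamma_pos_of_pos hs0).ne', mul_comm, hswap]

theorem integral_rpow_mul_hyp2F1 {b q r : ℝ} (hb : 0 < b) (hr : 0 ≤ r) (hrq : r < q) :
    ∫ x : ℝ, ((1 + x ^ 2) * q)⁻¹ ^ (b + 1 / 2) *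
        hyp2F1 (b + 1 / 2) (b + 1 / 2) b (r * ((1 + x ^ 2) * q)⁻¹)
      = √π * Gamma b / Gamma (b + 1 / 2) * (q - r) ^ (-(b + 1 / 2)) := by
  set a := b + 1 / 2 with ha_def
  have ha : 0 < a := by positivity
  have hq : 0 < q := hr.trans_lt hrq
  set A : ℕ → ℝ := fun k => Gamma (k + a) * Gamma (k + a) * Gamma b /
    (Gamma a * Gamma a * Gamma (k + b)) * r ^ k / k ! * q ^ (-(a + k))
  set g : ℕ → ℝ → ℝ := fun k x => A k * (1 + x ^ 2) ^ (-(a + k))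
  have hexpand : ∀ x : ℝ, ((1 + x ^ 2) * q)⁻¹ ^ a * hyp2F1 a a b (r * ((1 + x ^ 2) * q)⁻¹)
      = ∑' k, g k x := by
    intro x
    have hp : 0 < 1 + x ^ 2 := by positivity
    rw [hyp2F1, ← tsum_mul_left]
    refine tsum_congr fun k => ?_
    have hw : ((1 + x ^ 2) * q)⁻¹ ^ (a + k) = (1 + x ^ 2) ^ (-(a + k)) * q ^ (-(a + k)) := by
      rw [inv_rpow (by positivity), mul_rpow hp.le hq.le, mul_inv, ← rpow_neg hp.le,
        ← rpow_neg hq.le]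
    rw [rpow_add (by positivity), rpow_natCast] at hw
    simp only [g, A]
    linear_combination (Gamma (k + a) * Gamma (k + a) * Gamma b /
      (Gamma a * Gamma a * Gamma (k + b)) * r ^ k / k !) * hw
  have hg_integral : ∀ k : ℕ, ∫ x, g k x
      = √π * Gamma b / Gamma a ^ 2 * q ^ (-a) * (Gamma (k + a) * (r / q) ^ k / k !) := by
    intro k
    have hka : 0 < k + a := by positivity
    have hkb : 0 < k + b := by positivity
    simp only [g, A]
    rw [integral_const_mul, integral_one_add_sq_rpow_neg (by linarith),
      show a + k - 1 / 2 = k + b by rw [ha_def]; ring, add_comm a, neg_add, rpow_add hq,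
      rpow_neg hq.le (k : ℝ), rpow_natCast, div_pow]
    field_simp [(Gamma_pos_of_pos ha).ne', (Gamma_pos_of_pos hka).ne', (Gamma_pos_of_pos hkb).ne']
  have hg_integrable : ∀ k, Integrable (g k) := fun k =>
    (integrable_one_add_sq_rpow_neg (by linarith [k.cast_nonneg (α := ℝ)])).const_mul _
  have hsum : HasSum (fun k => ∫ x, g k x)
      (√π * Gamma b / Gamma a ^ 2 * q ^ (-a) * (Gamma a * (1 - r / q) ^ (-a))) := by
    have hrq' : |r / q| < 1 := by rwa [abs_of_nonneg (by positivity), div_lt_one hq]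
    simpa only [hg_integral] using
      (hasSum_Gamma_add_mul_pow_div_factorial ha hrq').mul_left (√π * Gamma b / Gamma a ^ 2 * q ^ (-a))
  have hsum_norm : Summable fun k => ∫ x, ‖g k x‖ :=
    hsum.summable.congr fun k =>
      integral_congr_ae (ae_of_all _ fun x => (norm_of_nonneg (by positivity)).symm)
  simp_rw [hexpand]
  rw [← integral_tsum_of_summable_integral_norm hg_integrable hsum_norm, hsum.tsum_eq,
    show q - r = q * (1 - r / q) by field_simp,
    mul_rpow hq.le (by rw [sub_nonneg, div_le_one hq]; exact hrq.le)]
  field_simp [(Gamma_pos_of_pos ha).ne']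

theorem integral_comp_mul_sub {E : Type*} [NormedAddCommGroup E] [NormedSpace ℝ E] (f : ℝ → E)
    {c : ℝ} (hc : 0 < c) (m : ℝ) : ∫ y, f (c * (y - m)) = c⁻¹ • ∫ x, f x := by
  rw [integral_sub_right_eq_self (fun y => f (c * y)) m, Measure.integral_comp_mul_left,
    abs_of_pos (inv_pos.2 hc)]

theorem integral_pairDensity {ν σ r : ℝ} (hν : 0 < ν) (hσ : 0 < σ) (hr0 : 0 ≤ r) (hr1 : r < 1)
    (μ₁ μ₂ y₂ : ℝ) :
    ∫ y₁, pairDensity ν σ r μ₁ μ₂ y₁ y₂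
      = (1 - r) ^ (ν / 2 + 1) / (π * ν * σ ^ 2) * (Gamma (ν / 2 + 1 / 2) / Gamma (ν / 2)) ^ 2 *
        ((√((1 - r) / (ν * σ ^ 2)))⁻¹ * (√π * Gamma (ν / 2) / Gamma (ν / 2 + 1 / 2) *
          (1 + (1 - r) * (y₂ - μ₂) ^ 2 / (ν * σ ^ 2) - r) ^ (-(ν / 2 + 1 / 2)))) := by
  have h1r : 0 < 1 - r := sub_pos.2 hr1
  set c := √((1 - r) / (ν * σ ^ 2)) with hc
  set q := 1 + (1 - r) * (y₂ - μ₂) ^ 2 / (ν * σ ^ 2)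
  set F : ℝ → ℝ := fun x => ((1 + x ^ 2) * q)⁻¹ ^ (ν / 2 + 1 / 2) *
    hyp2F1 (ν / 2 + 1 / 2) (ν / 2 + 1 / 2) (ν / 2) (r * ((1 + x ^ 2) * q)⁻¹)
  have hdensity : ∀ y₁, pairDensity ν σ r μ₁ μ₂ y₁ y₂ = (1 - r) ^ (ν / 2 + 1) / (π * ν * σ ^ 2) *
      (Gamma (ν / 2 + 1 / 2) / Gamma (ν / 2)) ^ 2 * F (c * (y₁ - μ₁)) := by
    intro y₁
    have hω : omegaFn ν σ r μ₁ μ₂ y₁ y₂ = ((1 + (c * (y₁ - μ₁)) ^ 2) * q)⁻¹ := by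
      rw [omegaFn, mul_pow, hc, sq_sqrt (by positivity)]
      ring
    rw [pairDensity, hω, show (ν + 1) / 2 = ν / 2 + 1 / 2 by ring, mul_assoc]
  have hrq : r < q := by
    have : 0 ≤ (1 - r) * (y₂ - μ₂) ^ 2 / (ν * σ ^ 2) := by positivity
    linarith
  simp_rw [hdensity]
  rw [integral_const_mul, integral_comp_mul_sub F (by positivity) μ₁, smul_eq_mul,
    integral_rpow_mul_hyp2F1 (by positivity) hr0 hrq]

/-- marginals of the pairwise joint density of the NSVt model are Student-t. -/
theorem pair_density_marginal (ν σ r μ₁ μ₂ : ℝ) (hν : 0 < ν) (hσ : 0 < σ)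
    (hr : r ∈ Set.Ioo (0 : ℝ) 1) (y₂ : ℝ) :
    (∫ y₁ : ℝ, pairDensity ν σ r μ₁ μ₂ y₁ y₂) = studentTPdf ν μ₂ σ y₂ := by
  obtain ⟨hr0, hr1⟩ := hr
  have h1r : 0 < 1 - r := by linarith
  have hshift : 1 + (1 - r) * (y₂ - μ₂) ^ 2 / (ν * σ ^ 2) - r
      = (1 - r) * (1 + (y₂ - μ₂) ^ 2 / (ν * σ ^ 2)) := by
    field_simp
    ring
  have hpow : (1 - r) ^ (ν / 2 + 1) = (1 - r) ^ (ν / 2 + 1 / 2) * √(1 - r) := by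
    rw [sqrt_eq_rpow, ← rpow_add h1r]
    ring_nf
  have hscale : √((1 - r) / (ν * σ ^ 2)) = √(1 - r) / (√ν * σ) := by
    rw [sqrt_div' _ (by positivity), sqrt_mul hν.le, sqrt_sq hσ.le]
  rw [integral_pairDensity hν hσ hr0.le hr1, hshift, mul_rpow h1r.le (by positivity),
    rpow_neg h1r.le, hpow, hscale, studentTPdf, show (ν + 1) / 2 = ν / 2 + 1 / 2 by ring,
    show -(ν + 1) / 2 = -(ν / 2 + 1 / 2) by ring, sqrt_mul pi_pos.le]
  field_simp
  rw [sq_sqrt hν.le, sq_sqrt pi_pos.le, mul_comm]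
end

section
/- Let ν>1, σ²>0, r∈(0,1) and μ₁,μ₂∈ℝ, and let f_J(y₁,y₂) = ((1−r)^{ν/2+1}/(πνσ²)) · (Γ((ν+1)/2)/Γ(ν/2))² · ω(y₁,y₂)^{(ν+1)/2} · ₂F₁((ν+1)/2, (ν+1)/2; ν/2; r·ω(y₁,y₂)) denote the pairwise joint density of the NSVt model. Then for every y₂∈ℝ, ∫_ℝ y₁ · f_J(y₁,y₂) dy₁ = μ₁ · t_{ν,μ₂,σ}(y₂); that is, the conditional mean of Y_{t+j} given Y_t in the NSVt model equals its location parameter: E(Y_{t+j} | Y_t = y_t) = μ_{t+j}. -/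
/-!
Expanding `₂F₁` writes `y₁ ↦ f_J(y₁, y₂)` as `∑ₖ cₖ (1 + a (y₁ - μ₁)²)^(-(A + k))` with
`A = (ν + 1)/2`, `a = (1 - r)/(νσ²)` and summable `cₖ ≥ 0`. Writing
`Γ(q) x^(-q) = ∫ s^(q-1) e^(-xs) ds` and integrating the resulting Gaussian gives each kernel
the mass `√(π/a) Γ(A + k - 1/2) / Γ(A + k)`; by symmetry its first moment is `μ₁` times that.
Since the lower parameter of `₂F₁` is `ν/2 = A - 1/2`, the factor `Γ(k + ν/2)` cancels and the
series of masses collapses to the binomial series `∑ (A)ₖ wᵏ / k! = (1 - w)^(-A)` with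
`w = r / (1 + a (y₂ - μ₂)²)`, leaving `μ₁` times the Student-t density. Termwise integration is
legitimate because every kernel is dominated by the `k = 0` one, whose first absolute moment is
finite as `A > 1`.
-/
open MeasureTheory Real Set

open scoped Nat

lemma one_add_mul_sq_pos {a : ℝ} (ha : 0 ≤ a) (t : ℝ) : 0 < 1 + a * t ^ 2 := by positivity

noncomputable def tKernel (a q t : ℝ) : ℝ := (1 + a * t ^ 2) ^ (-q)

namespace tKernel

variable {a q : ℝ}

lemma pos (ha : 0 ≤ a) (q t : ℝ) : 0 < tKernel a q t :=
  rpow_pos_of_pos (one_add_mul_sq_pos ha t) _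

lemma continuous (ha : 0 ≤ a) (q : ℝ) : Continuous (tKernel a q) :=
  (continuous_const.add (continuous_const.mul (continuous_pow 2))).rpow_const
    fun t => Or.inl (one_add_mul_sq_pos ha t).ne'

lemma antitone_exponent (ha : 0 ≤ a) {q q' : ℝ} (hqq' : q ≤ q') (t : ℝ) :
    tKernel a q' t ≤ tKernel a q t :=
  rpow_le_rpow_of_exponent_le (by nlinarith [sq_nonneg t]) (neg_le_neg hqq')

lemma integrable (ha : 0 < a) (hq : 1 / 2 < q) : Integrable (tKernel a q) := by
  have h := (integrable_rpow_neg_one_add_norm_sq (E := ℝ) (μ := volume) (r := 2 * q)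
    (by simp only [Module.finrank_self, Nat.cast_one]; linarith)).comp_mul_left'
    (Real.sqrt_pos.2 ha).ne'
  refine h.congr (ae_of_all _ fun t => ?_)
  simp only [tKernel, norm_mul, Real.norm_eq_abs, sq_abs, mul_pow, Real.sq_sqrt ha.le,
    abs_of_nonneg (Real.sqrt_nonneg a)]
  ring_nf

lemma Gamma_mul_eq_integral (ha : 0 ≤ a) (hq : 0 < q) (t : ℝ) :
    Gamma q * tKernel a q t = ∫ s in Ioi 0, s ^ (q - 1) * exp (-((1 + a * t ^ 2) * s)) := by
  rw [integral_rpow_mul_exp_neg_mul_Ioi hq (one_add_mul_sq_pos ha t), one_div,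
    inv_rpow (one_add_mul_sq_pos ha t).le, ← rpow_neg (one_add_mul_sq_pos ha t).le, tKernel,
    mul_comm]

lemma integral_rpow_mul_exp_neg_one_add_mul_sq {s : ℝ} (hs : 0 < s) :
    ∫ t, s ^ (q - 1) * exp (-((1 + a * t ^ 2) * s)) =
      √(π / a) * (s ^ (q - 1 / 2 - 1) * exp (-(1 * s))) := by
  have hexp : ∀ t : ℝ, s ^ (q - 1) * exp (-((1 + a * t ^ 2) * s)) =
      s ^ (q - 1) * exp (-s) * exp (-(a * s) * t ^ 2) := fun t => by
    rw [mul_assoc, ← exp_add]; ring_nf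
  have hsqrt : √(π / (a * s)) = √(π / a) * s ^ (-(1 / 2) : ℝ) := by
    rw [div_mul_eq_div_div, sqrt_div' _ hs.le, sqrt_eq_rpow s, rpow_neg hs.le, div_eq_mul_inv]
  simp_rw [hexp]
  rw [integral_const_mul, integral_gaussian, hsqrt,
    show q - 1 / 2 - 1 = (q - 1) + (-(1 / 2)) by ring, rpow_add hs, one_mul]
  ring

lemma integral_eq (ha : 0 < a) (hq : 1 / 2 < q) :
    ∫ t, tKernel a q t = √(π / a) * Gamma (q - 1 / 2) / Gamma q := by
  have hq0 : 0 < q := by linarith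
  set f : ℝ × ℝ → ℝ := fun p => p.2 ^ (q - 1) * exp (-((1 + a * p.1 ^ 2) * p.2))
  have hf_nonneg : ∀ p : ℝ × ℝ, p.2 ∈ Ioi 0 → 0 ≤ f p := fun p hp => by
    have : 0 < p.2 := hp; positivity
  have hf_int : Integrable f (volume.prod (volume.restrict (Ioi 0))) := by
    refine (integrable_prod_iff (by fun_prop)).2 ⟨ae_of_all _ fun t => ?_, ?_⟩
    · show IntegrableOn (fun s => f (t, s)) (Ioi 0)
      simpa only [f, rpow_one, neg_mul] using
        integrableOn_rpow_mul_exp_neg_mul_rpow (by linarith) one_pos (one_add_mul_sq_pos ha.le t)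
    · refine ((integrable ha hq).const_mul (Gamma q)).congr (ae_of_all _ fun t => ?_)
      dsimp only
      rw [Gamma_mul_eq_integral ha.le hq0]
      refine setIntegral_congr_fun measurableSet_Ioi fun s hs => ?_
      exact (Real.norm_of_nonneg (hf_nonneg (t, s) hs)).symm
  calc ∫ t, tKernel a q t = (Gamma q)⁻¹ * ∫ t, ∫ s in Ioi 0, f (t, s) := by
        rw [← integral_const_mul]
        refine integral_congr_ae (ae_of_all _ fun t => ?_)
        dsimp only [f]
        rw [← Gamma_mul_eq_integral ha.le hq0, inv_mul_cancel_left₀ (Gamma_pos_of_pos hq0).ne']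
    _ = (Gamma q)⁻¹ * ∫ s in Ioi 0, ∫ t, f (t, s) := by rw [integral_integral_swap hf_int]
    _ = (Gamma q)⁻¹ * ∫ s in Ioi 0, √(π / a) * (s ^ (q - 1 / 2 - 1) * exp (-(1 * s))) := by
        congr 1
        exact setIntegral_congr_fun measurableSet_Ioi fun s hs =>
          integral_rpow_mul_exp_neg_one_add_mul_sq hs
    _ = √(π / a) * Gamma (q - 1 / 2) / Gamma q := by
        rw [integral_const_mul, integral_rpow_mul_exp_neg_mul_Ioi (by linarith) one_pos, div_one,
          one_rpow, one_mul]
        field_simp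

lemma abs_mul_le (ha : 0 < a) (q t : ℝ) :
    |t| * tKernel a q t ≤ (√a)⁻¹ * tKernel a (q - 1 / 2) t := by
  have hB := one_add_mul_sq_pos ha.le t
  have habs : |t| ≤ (√a)⁻¹ * √(1 + a * t ^ 2) := by
    rw [← sqrt_sq_eq_abs, ← sqrt_inv, ← sqrt_mul (inv_nonneg.2 ha.le)]
    refine sqrt_le_sqrt ?_
    rw [mul_add, inv_mul_cancel_left₀ ha.ne']
    linarith [inv_pos.2 ha]
  calc |t| * tKernel a q t ≤ (√a)⁻¹ * √(1 + a * t ^ 2) * tKernel a q t :=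
        mul_le_mul_of_nonneg_right habs (pos ha.le q t).le
    _ = (√a)⁻¹ * tKernel a (q - 1 / 2) t := by
        rw [mul_assoc, tKernel, tKernel, sqrt_eq_rpow (1 + a * t ^ 2), ← rpow_add hB]
        ring_nf

lemma integrable_mul (ha : 0 < a) (hq : 1 < q) : Integrable fun t => t * tKernel a q t := by
  refine ((integrable ha (by linarith : 1 / 2 < q - 1 / 2)).const_mul (√a)⁻¹).mono'
    ((continuous_id.mul (continuous ha.le q)).aestronglyMeasurable) (ae_of_all _ fun t => ?_)
  rw [norm_mul, Real.norm_eq_abs, Real.norm_of_nonneg (pos ha.le q t).le]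
  exact abs_mul_le ha q t

lemma integral_mul_eq_zero (a q : ℝ) : ∫ t, t * tKernel a q t = 0 := by
  have h := integral_neg_eq_self (fun t => t * tKernel a q t) volume
  simp only [tKernel, neg_mul, even_two, Even.neg_pow, integral_neg] at h
  unfold tKernel
  linarith

lemma integrable_mul_comp_sub (ha : 0 < a) (hq : 1 < q) (μ : ℝ) :
    Integrable fun y => y * tKernel a q (y - μ) := by
  refine (((integrable_mul ha hq).comp_sub_right μ).add
    (((integrable ha (by linarith : 1 / 2 < q)).comp_sub_right μ).const_mul μ)).congr
    (ae_of_all _ fun y => ?_)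
  simp only [Pi.add_apply]
  ring

lemma integral_mul_comp_sub (ha : 0 < a) (hq : 1 < q) (μ : ℝ) :
    ∫ y, y * tKernel a q (y - μ) = μ * ∫ t, tKernel a q t := by
  have hsplit : ∀ y, y * tKernel a q (y - μ) =
      (y - μ) * tKernel a q (y - μ) + μ * tKernel a q (y - μ) := fun y => by ring
  simp_rw [hsplit]
  rw [integral_add ((integrable_mul ha hq).comp_sub_right μ)
      (((integrable ha (by linarith : 1 / 2 < q)).comp_sub_right μ).const_mul μ),
    integral_const_mul, integral_sub_right_eq_self (fun t => t * tKernel a q t),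
    integral_sub_right_eq_self (tKernel a q), integral_mul_eq_zero, zero_add]

lemma integral_mul_tsum (ha : 0 < a) (hq : 1 < q) (μ : ℝ) {c : ℕ → ℝ}
    (hc : Summable fun k => ‖c k‖) :
    ∫ y, y * ∑' k, c k * tKernel a (q + k) (y - μ) =
      μ * ∑' k, c k * ∫ t, tKernel a (q + k) t := by
  set F : ℕ → ℝ → ℝ := fun k y => c k * (y * tKernel a (q + k) (y - μ))
  have hqk : ∀ k : ℕ, 1 < q + k := fun k => by linarith [k.cast_nonneg (α := ℝ)]
  have hF_int : ∀ k, Integrable (F k) := fun k =>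
    (integrable_mul_comp_sub ha (hqk k) μ).const_mul (c k)
  have hF_le : ∀ k y, ‖F k y‖ ≤ ‖c k‖ * ‖y * tKernel a q (y - μ)‖ := fun k y => by
    simp only [F, norm_mul, Real.norm_of_nonneg (pos ha.le _ _).le]
    gcongr
    exact antitone_exponent ha.le (by linarith [k.cast_nonneg (α := ℝ)]) _
  have hF_sum : Summable fun k => ∫ y, ‖F k y‖ := by
    refine (hc.mul_right (∫ y, ‖y * tKernel a q (y - μ)‖)).of_nonneg_of_le
      (fun k => integral_nonneg fun y => norm_nonneg _) fun k => ?_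
    rw [← integral_const_mul]
    exact integral_mono (hF_int k).norm
      ((integrable_mul_comp_sub ha hq μ).norm.const_mul _) (hF_le k)
  calc ∫ y, y * ∑' k, c k * tKernel a (q + k) (y - μ) = ∫ y, ∑' k, F k y := by
        refine integral_congr_ae (ae_of_all _ fun y => ?_)
        simp only [F, ← tsum_mul_left]
        exact tsum_congr fun k => by ring
    _ = ∑' k, ∫ y, F k y := (integral_tsum_of_summable_integral_norm hF_int hF_sum).symm
    _ = μ * ∑' k, c k * ∫ t, tKernel a (q + k) t := by
        simp only [F, integral_const_mul, integral_mul_comp_sub ha (hqk _), ← tsum_mul_left]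
        exact tsum_congr fun k => by ring

end tKernel

lemma Real.Gamma_natCast_add_eq_ascPochhammer_mul {a : ℝ} (ha : 0 < a) (n : ℕ) :
    Gamma (n + a) = (ascPochhammer ℝ n).eval a * Gamma a := by
  induction n with
  | zero => simp
  | succ n ih =>
    rw [ascPochhammer_succ_eval, Nat.cast_succ, add_right_comm,
      Gamma_add_one (by positivity), ih]
    ring

lemma Real.ringChoose_add_natCast_sub_one_eq_Gamma_div {a : ℝ} (ha : 0 < a) (n : ℕ) :
    Ring.choose (a + n - 1) n = Gamma (n + a) / (Gamma a * n !) := by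
  have h := Ring.factorial_nsmul_multichoose_eq_ascPochhammer a n
  rw [Ring.multichoose_eq, Polynomial.ascPochhammer_smeval_eq_eval, nsmul_eq_mul] at h
  rw [Real.Gamma_natCast_add_eq_ascPochhammer_mul ha, ← h]
  field_simp [(Gamma_pos_of_pos ha).ne']

lemma hasSum_Gamma_add_div_mul_pow {a x : ℝ} (ha : 0 < a) (hx : |x| < 1) :
    HasSum (fun k : ℕ => Gamma (k + a) / (Gamma a * k !) * x ^ k) ((1 - x) ^ (-a)) := by
  have h := (Real.one_div_one_sub_rpow_hasFPowerSeriesOnBall_zero a).hasSum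
    (y := x) (by simpa [enorm_eq_nnnorm, ← NNReal.coe_lt_one] using hx)
  simp only [FormalMultilinearSeries.ofScalars_apply_eq, smul_eq_mul, zero_add,
    Real.ringChoose_add_natCast_sub_one_eq_Gamma_div ha] at h
  rwa [one_div, ← rpow_neg (by linarith [abs_lt.1 hx])] at h

noncomputable def hyp2F1Coeff (a₁ a₂ b : ℝ) (k : ℕ) : ℝ :=
  Gamma (k + a₁) * Gamma (k + a₂) * Gamma b / (Gamma a₁ * Gamma a₂ * Gamma (k + b)) / k !

lemma hyp2F1_eq_tsum (a₁ a₂ b x : ℝ) :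
    hyp2F1 a₁ a₂ b x = ∑' k, hyp2F1Coeff a₁ a₂ b k * x ^ k :=
  tsum_congr fun k => by simp only [hyp2F1Coeff]; ring

lemma hyp2F1Coeff_eq_ordinaryHypergeometricCoefficient {a₁ a₂ b : ℝ} (ha₁ : 0 < a₁)
    (ha₂ : 0 < a₂) (hb : 0 < b) (k : ℕ) :
    hyp2F1Coeff a₁ a₂ b k = ordinaryHypergeometricCoefficient a₁ a₂ b k := by
  have hb' := (ascPochhammer_pos k b hb).ne'
  simp only [hyp2F1Coeff, Real.Gamma_natCast_add_eq_ascPochhammer_mul ha₁,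
    Real.Gamma_natCast_add_eq_ascPochhammer_mul ha₂,
    Real.Gamma_natCast_add_eq_ascPochhammer_mul hb]
  field_simp [(Gamma_pos_of_pos ha₁).ne', (Gamma_pos_of_pos ha₂).ne', (Gamma_pos_of_pos hb).ne']

lemma summable_norm_hyp2F1Coeff_mul_pow {a₁ a₂ b x : ℝ} (ha₁ : 0 < a₁) (ha₂ : 0 < a₂)
    (hb : 0 < b) (hx : |x| < 1) : Summable fun k => ‖hyp2F1Coeff a₁ a₂ b k * x ^ k‖ := by
  have hrad := ordinaryHypergeometricSeries_radius_eq_one ℝ a₁ a₂ b fun k =>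
    ⟨by linarith [k.cast_nonneg (α := ℝ)], by linarith [k.cast_nonneg (α := ℝ)],
      by linarith [k.cast_nonneg (α := ℝ)]⟩
  have h := (ordinaryHypergeometricSeries ℝ a₁ a₂ b).summable_norm_apply (x := x)
    (by rw [hrad]; simpa [enorm_eq_nnnorm, ← NNReal.coe_lt_one] using hx)
  simpa only [ordinaryHypergeometricSeries_apply_eq, smul_eq_mul,
    ← hyp2F1Coeff_eq_ordinaryHypergeometricCoefficient ha₁ ha₂ hb] using h

lemma hyp2F1Coeff_self_mul_Gamma_div {A b : ℝ} (hA : 0 < A) (hb : 0 < b) (k : ℕ) :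
    hyp2F1Coeff A A b k * (Gamma (k + b) / Gamma (k + A)) =
      Gamma b / Gamma A * (Gamma (k + A) / (Gamma A * k !)) := by
  have := (Gamma_pos_of_pos (by positivity : 0 < k + A)).ne'
  have := (Gamma_pos_of_pos (by positivity : 0 < k + b)).ne'
  have := (Gamma_pos_of_pos hA).ne'
  simp only [hyp2F1Coeff]
  field_simp

lemma inv_mul_rpow_mul_hyp2F1 {L B : ℝ} (hL : 0 < L) (hB : 0 < B) (A a₁ a₂ b r : ℝ) :
    (L * B)⁻¹ ^ A * hyp2F1 a₁ a₂ b (r * (L * B)⁻¹) =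
      ∑' k : ℕ, B ^ (-A) * hyp2F1Coeff a₁ a₂ b k * (r / B) ^ k * L ^ (-(A + k)) := by
  rw [hyp2F1_eq_tsum, ← tsum_mul_left]
  refine tsum_congr fun k => ?_
  have hsplit : L ^ (-(A + k)) = L ^ (-A) * (L ^ k)⁻¹ := by
    rw [neg_add, rpow_add hL, rpow_neg hL.le (k : ℝ), rpow_natCast]
  rw [hsplit, mul_inv, mul_rpow (inv_nonneg.2 hL.le) (inv_nonneg.2 hB.le), inv_rpow hL.le,
    inv_rpow hB.le, ← rpow_neg hL.le, ← rpow_neg hB.le]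
  simp only [mul_pow, div_eq_mul_inv, inv_pow]
  ring

lemma tsum_hyp2F1Coeff_mul_integral_tKernel {a A b r B : ℝ} (ha : 0 < a) (hA : 1 / 2 < A)
    (hb : b = A - 1 / 2) (hB : 0 < B) (hx : |r / B| < 1) :
    ∑' k : ℕ, B ^ (-A) * hyp2F1Coeff A A b k * (r / B) ^ k * ∫ t, tKernel a (A + k) t =
      √(π / a) * (Gamma b / Gamma A) * (B - r) ^ (-A) := by
  subst hb
  have hk : ∀ k : ℕ, ∫ t, tKernel a (A + k) t =
      √(π / a) * (Gamma (k + (A - 1 / 2)) / Gamma (k + A)) := fun k => by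
      rw [tKernel.integral_eq ha (by linarith [k.cast_nonneg (α := ℝ)])]
      ring_nf
  have hsum := (hasSum_Gamma_add_div_mul_pow (by linarith : 0 < A) hx).mul_left
    (B ^ (-A) * √(π / a) * (Gamma (A - 1 / 2) / Gamma A))
  calc _ = ∑' k : ℕ, B ^ (-A) * √(π / a) * (Gamma (A - 1 / 2) / Gamma A) *
        (Gamma (k + A) / (Gamma A * k !) * (r / B) ^ k) := tsum_congr fun k => by
          rw [hk]
          linear_combination (B ^ (-A) * (r / B) ^ k * √(π / a)) *
            hyp2F1Coeff_self_mul_Gamma_div (by linarith : 0 < A) (by linarith : 0 < A - 1 / 2) k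
    _ = √(π / a) * (Gamma (A - 1 / 2) / Gamma A) * (B ^ (-A) * (1 - r / B) ^ (-A)) := by
          rw [hsum.tsum_eq]; ring
    _ = √(π / a) * (Gamma (A - 1 / 2) / Gamma A) * (B - r) ^ (-A) := by
          rw [← mul_rpow hB.le (by linarith [abs_lt.1 hx]), mul_sub, mul_one,
            mul_div_cancel₀ _ hB.ne']

section NSVt

variable {ν σ r μ₁ μ₂ y₂ a B : ℝ}

lemma pairDensity_eq_tsum (ha : a = (1 - r) / (ν * σ ^ 2)) (hB : B = 1 + a * (y₂ - μ₂) ^ 2)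
    (ha0 : 0 ≤ a) (y₁ : ℝ) :
    pairDensity ν σ r μ₁ μ₂ y₁ y₂ =
      ∑' k : ℕ, (1 - r) ^ (ν / 2 + 1) / (π * ν * σ ^ 2) *
        (Gamma ((ν + 1) / 2) / Gamma (ν / 2)) ^ 2 *
        (B ^ (-((ν + 1) / 2)) * hyp2F1Coeff ((ν + 1) / 2) ((ν + 1) / 2) (ν / 2) k *
          (r / B) ^ k) * tKernel a ((ν + 1) / 2 + k) (y₁ - μ₁) := by
  have hω : omegaFn ν σ r μ₁ μ₂ y₁ y₂ = ((1 + a * (y₁ - μ₁) ^ 2) * B)⁻¹ := by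
    rw [omegaFn, hB, ha]; ring
  rw [pairDensity, hω, mul_assoc, inv_mul_rpow_mul_hyp2F1 (one_add_mul_sq_pos ha0 _)
    (hB ▸ one_add_mul_sq_pos ha0 _), ← tsum_mul_left]
  exact tsum_congr fun k => by rw [tKernel]; ring

lemma pairDensity_const_mul_eq_studentTPdf (hν : 0 < ν) (hσ : 0 < σ) (hr : r < 1)
    (ha : a = (1 - r) / (ν * σ ^ 2)) (hB : B = 1 + a * (y₂ - μ₂) ^ 2) :
    (1 - r) ^ (ν / 2 + 1) / (π * ν * σ ^ 2) * (Gamma ((ν + 1) / 2) / Gamma (ν / 2)) ^ 2 *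
        (√(π / a) * (Gamma (ν / 2) / Gamma ((ν + 1) / 2)) * (B - r) ^ (-((ν + 1) / 2))) =
      studentTPdf ν μ₂ σ y₂ := by
  subst ha hB
  have h1r : 0 < 1 - r := by linarith
  have hD : 0 < 1 + (y₂ - μ₂) ^ 2 / (ν * σ ^ 2) := by positivity
  have hBr : 1 + (1 - r) / (ν * σ ^ 2) * (y₂ - μ₂) ^ 2 - r =
      (1 - r) * (1 + (y₂ - μ₂) ^ 2 / (ν * σ ^ 2)) := by
    field_simp; ring
  have hsqrt : √(π / ((1 - r) / (ν * σ ^ 2))) = √(π * ν) * σ / √(1 - r) := by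
    rw [div_div_eq_mul_div, sqrt_div' _ h1r.le, ← mul_assoc, sqrt_mul (by positivity),
      sqrt_sq hσ.le]
  have hpow : (1 - r) ^ (ν / 2 + 1) * (1 - r) ^ (-((ν + 1) / 2)) = √(1 - r) := by
    rw [← rpow_add h1r, sqrt_eq_rpow]; ring_nf
  have := (sqrt_pos.2 (by positivity : 0 < π * ν)).ne'
  have := (Gamma_pos_of_pos (by linarith : 0 < (ν + 1) / 2)).ne'
  rw [studentTPdf, hBr, mul_rpow h1r.le hD.le, hsqrt, neg_div, ← hpow]
  have := (rpow_pos_of_pos h1r (ν / 2 + 1)).ne'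
  have := (rpow_pos_of_pos h1r (-((ν + 1) / 2))).ne'
  have := (Gamma_pos_of_pos (by linarith : 0 < ν / 2)).ne'
  field_simp
  exact sq_sqrt (by positivity)

end NSVt

/-- the conditional mean of the NSVt model equals its location parameter. -/
theorem pair_density_cond_mean (ν σ r μ₁ μ₂ : ℝ) (hν : 1 < ν) (hσ : 0 < σ)
    (hr : r ∈ Set.Ioo (0 : ℝ) 1) (y₂ : ℝ) :
    (∫ y₁ : ℝ, y₁ * pairDensity ν σ r μ₁ μ₂ y₁ y₂) = μ₁ * studentTPdf ν μ₂ σ y₂ := by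
  obtain ⟨hr0, hr1⟩ := hr
  set a := (1 - r) / (ν * σ ^ 2) with ha
  set B := 1 + a * (y₂ - μ₂) ^ 2 with hB
  have ha0 : 0 < a := div_pos (by linarith) (by positivity)
  have hB0 : 0 < B := one_add_mul_sq_pos ha0.le _
  have hx : |r / B| < 1 := by
    rw [abs_of_pos (div_pos hr0 hB0), div_lt_one hB0]
    nlinarith [sq_nonneg (y₂ - μ₂)]
  set C := (1 - r) ^ (ν / 2 + 1) / (π * ν * σ ^ 2) * (Gamma ((ν + 1) / 2) / Gamma (ν / 2)) ^ 2
  set c : ℕ → ℝ := fun k =>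
    C * (B ^ (-((ν + 1) / 2)) * hyp2F1Coeff ((ν + 1) / 2) ((ν + 1) / 2) (ν / 2) k * (r / B) ^ k)
  have hc : Summable fun k => ‖c k‖ := by
    simpa only [c, norm_mul, mul_assoc] using (summable_norm_hyp2F1Coeff_mul_pow
      (by linarith : 0 < (ν + 1) / 2) (by linarith) (by linarith : 0 < ν / 2) hx).mul_left
      (‖C‖ * ‖B ^ (-((ν + 1) / 2))‖)
  calc ∫ y₁, y₁ * pairDensity ν σ r μ₁ μ₂ y₁ y₂
      = ∫ y₁, y₁ * ∑' k, c k * tKernel a ((ν + 1) / 2 + k) (y₁ - μ₁) := by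
        simp_rw [pairDensity_eq_tsum ha hB ha0.le]
        rfl
    _ = μ₁ * ∑' k, c k * ∫ t, tKernel a ((ν + 1) / 2 + k) t :=
        tKernel.integral_mul_tsum ha0 (by linarith) μ₁ hc
    _ = μ₁ * (C * (√(π / a) * (Gamma (ν / 2) / Gamma ((ν + 1) / 2)) *
          (B - r) ^ (-((ν + 1) / 2)))) := by
        simp_rw [c, mul_assoc C, tsum_mul_left]
        rw [tsum_hyp2F1Coeff_mul_integral_tKernel ha0 (by linarith) (by ring) hB0 hx]
    _ = μ₁ * studentTPdf ν μ₂ σ y₂ := by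
        rw [pairDensity_const_mul_eq_studentTPdf (by linarith) hσ hr1 ha hB]
end

section
/- (CLEM E-step: expectation of the latent negative binomial variable.) Let ν>0, σ²>0, r∈(0,1) and μ₁,μ₂∈ℝ. For u∈ℕ and y∈ℝ define h_u(y,μ) = ∫₀^∞ f(y|z,μ) · γ_{ν/(2(1−r)), ν/2+u}(z) dz, where γ_{γ,α} is the gamma density with rate γ and shape α. Then for all y₁,y₂∈ℝ, with y_i* = y_i − μ_i and v(u) = 1 + (1−r)u²/(νσ²), ∑_{u=0}^∞ u · [Γ(ν/2+u)/(Γ(ν/2)·u!) · (1−r)^{ν/2} · r^u] · h_u(y₁,μ₁) · h_u(y₂,μ₂) = (2r(1−r)^{ν/2+1} Γ((ν+3)/2)²/(π ν² σ² Γ(ν/2)²)) · ₂F₁((ν+3)/2, (ν+3)/2; ν/2+1; r/(v(y₁*)v(y₂*))) / (v(y₁*)·v(y₂*))^{(ν+3)/2}. Dividing by the pairwise joint density f(y₁,y₂) gives the CLEM conditional expectation τ = E(U | Y_t=y₁, Y_{t−i}=y₂). -/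
open MeasureTheory Real Set

lemma integral_aux (σ μ y : ℝ) (hσ : 0 < σ) {γ α : ℝ} (hγ : 0 < γ) (hα : 0 < α) :
    ∫ z in Set.Ioi (0:ℝ), normCond σ μ y z * gammaPdf γ α z =
      γ ^ α * Real.Gamma (α + 1/2) /
        (Real.sqrt (2*Real.pi) * σ * Real.Gamma α * (γ + (y-μ)^2/(2*σ^2)) ^ (α + 1/2)) := by
  have hπ : (0:ℝ) < Real.sqrt (2*Real.pi) := Real.sqrt_pos.2 (by positivity)
  set c : ℝ := (y-μ)^2/(2*σ^2) with hc
  have hc0 : 0 ≤ c := by positivity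
  have hp : 0 < γ + c := by linarith
  have hΓα : 0 < Real.Gamma α := Real.Gamma_pos_of_pos hα
  have step : ∫ z in Set.Ioi (0:ℝ), normCond σ μ y z * gammaPdf γ α z
      = γ ^ α / (Real.sqrt (2*Real.pi) * σ * Real.Gamma α) *
        ∫ z in Set.Ioi (0:ℝ), z ^ (α + 1/2 - 1) * Real.exp (-((γ + c) * z)) := by
    rw [← integral_const_mul]
    refine setIntegral_congr_fun measurableSet_Ioi (fun z hz => ?_)
    have hz : (0:ℝ) < z := hz
    rw [normCond, gammaPdf]
    rw [Real.sqrt_eq_rpow]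
    rw [show α + 1/2 - 1 = (1/2 : ℝ) + (α - 1) by ring, Real.rpow_add hz]
    rw [show -((γ + c) * z) = -z * (y - μ) ^ 2 / (2 * σ ^ 2) + -γ * z by
      rw [hc]; field_simp; ring, Real.exp_add]
    field_simp
  rw [step, integral_rpow_mul_exp_neg_mul_Ioi (by positivity) hp]
  rw [one_div, Real.inv_rpow hp.le]
  field_simp

lemma prod_aux (ν σ r : ℝ) (hν : 0 < ν) (hσ : 0 < σ) (hr1 : r < 1)
    (y₁ μ₁ y₂ μ₂ : ℝ) (u : ℕ) :
    (∫ z in Set.Ioi (0:ℝ), normCond σ μ₁ y₁ z * gammaPdf (ν / (2 * (1 - r))) (ν / 2 + u) z) *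
    (∫ z in Set.Ioi (0:ℝ), normCond σ μ₂ y₂ z * gammaPdf (ν / (2 * (1 - r))) (ν / 2 + u) z)
    = (1 - r) * Real.Gamma (ν / 2 + (u:ℝ) + 1/2) ^ 2 /
      (Real.pi * ν * σ ^ 2 * Real.Gamma (ν / 2 + (u:ℝ)) ^ 2 *
        ((1 + (1 - r) * (y₁ - μ₁) ^ 2 / (ν * σ ^ 2)) *
          (1 + (1 - r) * (y₂ - μ₂) ^ 2 / (ν * σ ^ 2))) ^ (ν / 2 + (u:ℝ) + 1/2)) := by
  have h1r : 0 < 1 - r := by linarith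
  have hγ : 0 < ν / (2 * (1 - r)) := by positivity
  have hα : 0 < ν / 2 + (u:ℝ) := by positivity
  have hv₁ : 0 < 1 + (1 - r) * (y₁ - μ₁) ^ 2 / (ν * σ ^ 2) := by positivity
  have hv₂ : 0 < 1 + (1 - r) * (y₂ - μ₂) ^ 2 / (ν * σ ^ 2) := by positivity
  have key : ∀ y μ : ℝ, ν / (2 * (1 - r)) + (y - μ) ^ 2 / (2 * σ ^ 2)
      = (ν / (2 * (1 - r))) * (1 + (1 - r) * (y - μ) ^ 2 / (ν * σ ^ 2)) := by
    intro y μ; field_simp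
  rw [integral_aux σ μ₁ y₁ hσ hγ hα, integral_aux σ μ₂ y₂ hσ hγ hα, key y₁ μ₁, key y₂ μ₂]
  set G : ℝ := ν / (2 * (1 - r)) with hGdef
  set v₁ : ℝ := 1 + (1 - r) * (y₁ - μ₁) ^ 2 / (ν * σ ^ 2)
  set v₂ : ℝ := 1 + (1 - r) * (y₂ - μ₂) ^ 2 / (ν * σ ^ 2)
  set a : ℝ := ν / 2 + (u:ℝ)
  rw [Real.mul_rpow hγ.le hv₁.le, Real.mul_rpow hγ.le hv₂.le]
  have hΓa : 0 < Real.Gamma a := Real.Gamma_pos_of_pos hα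
  have hq : Real.sqrt (2*Real.pi) * Real.sqrt (2*Real.pi) = 2 * Real.pi :=
    Real.mul_self_sqrt (by positivity)
  have hg : G ^ (a + 1/2) * G ^ (a + 1/2) = G ^ a * G ^ a * G := by
    rw [← Real.rpow_add hγ, ← Real.rpow_add hγ,
      show a + 1/2 + (a + 1/2) = a + a + 1 by ring, Real.rpow_add hγ, Real.rpow_one]
  have hw : v₁ ^ (a + 1/2) * v₂ ^ (a + 1/2) = (v₁ * v₂) ^ (a + 1/2) :=
    (Real.mul_rpow hv₁.le hv₂.le).symm
  have hGν : 2 * (1 - r) * G = ν := by rw [hGdef]; field_simp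
  rw [div_mul_div_comm]
  rw [div_eq_div_iff (by positivity) (by positivity)]
  set q : ℝ := Real.sqrt (2*Real.pi)
  set Γ1 : ℝ := Real.Gamma (a + 1/2)
  set Γa : ℝ := Real.Gamma a
  set g2 : ℝ := G ^ (a + 1/2)
  set ga : ℝ := G ^ a
  set w1 : ℝ := v₁ ^ (a + 1/2)
  set w2 : ℝ := v₂ ^ (a + 1/2)
  set w12 : ℝ := (v₁ * v₂) ^ (a + 1/2)
  linear_combination (-((1-r)*Γ1^2*σ^2*Γa^2*g2*g2*w1*w2)) * hq +
    (-((1-r)*Γ1^2*σ^2*Γa^2*(2*Real.pi)*w1*w2)) * hg +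
    (-((1-r)*Γ1^2*σ^2*Γa^2*(2*Real.pi)*ga*ga*G)) * hw +
    (-(Γ1^2*σ^2*Γa^2*Real.pi*ga*ga*w12)) * hGν

lemma tsum_shift {F : ℕ → ℝ} (h0 : F 0 = 0) : ∑' u : ℕ, F u = ∑' k : ℕ, F (k + 1) := by
  apply tsum_eq_tsum_of_ne_zero_bij (fun k => (k : ℕ) + 1)
  · intro a b hab
    exact Subtype.ext (by simpa using hab)
  · intro u hu
    match u, hu with
    | 0, hu => exact absurd h0 hu
    | (k+1), hu => exact ⟨⟨k, hu⟩, rfl⟩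
  · intro x; rfl

lemma term_aux (ν σ r w : ℝ) (hν : 0 < ν) (hσ : 0 < σ)
    (hr0 : 0 < r) (hr1 : r < 1) (hw : 0 < w) (k : ℕ) :
    (((k+1 : ℕ) : ℝ)) * nbinomPmf (ν / 2) r (k+1) *
      ((1 - r) * Real.Gamma (ν / 2 + ((k+1 : ℕ) : ℝ) + 1/2) ^ 2 /
        (Real.pi * ν * σ ^ 2 * Real.Gamma (ν / 2 + ((k+1 : ℕ) : ℝ)) ^ 2 *
          w ^ (ν / 2 + ((k+1 : ℕ) : ℝ) + 1/2)))
    = 2 * r * (1 - r) ^ (ν / 2 + 1) * Real.Gamma ((ν + 3) / 2) ^ 2 /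
        (Real.pi * ν ^ 2 * σ ^ 2 * Real.Gamma (ν / 2) ^ 2) *
        (Real.Gamma ((k : ℝ) + (ν + 3) / 2) * Real.Gamma ((k : ℝ) + (ν + 3) / 2) *
          Real.Gamma (ν / 2 + 1) /
          (Real.Gamma ((ν + 3) / 2) * Real.Gamma ((ν + 3) / 2) *
            Real.Gamma ((k : ℝ) + (ν / 2 + 1))) *
          (r / w) ^ k / (Nat.factorial k : ℝ)) /
        w ^ ((ν + 3) / 2) := by
  have h1r : 0 < 1 - r := by linarith
  have hπ := Real.pi_pos
  have hs : (0:ℝ) < ν / 2 := by linarith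
  rw [nbinomPmf]
  have e1 : ν / 2 + (((k+1 : ℕ)) : ℝ) = (k : ℝ) + (ν / 2 + 1) := by push_cast; ring
  have e2 : ν / 2 + (((k+1 : ℕ)) : ℝ) + 1/2 = (k : ℝ) + (ν + 3) / 2 := by push_cast; ring
  rw [e2, e1]
  rw [show ((k : ℝ) + (ν + 3) / 2) = ((ν + 3) / 2) + (k : ℝ) by ring,
    Real.rpow_add hw, Real.rpow_natCast]
  rw [Real.Gamma_add_one (ne_of_gt hs)]
  rw [show ν / 2 + 1 = (ν / 2) + 1 from rfl, Real.rpow_add h1r, Real.rpow_one]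
  rw [pow_succ r k, div_pow, Nat.factorial_succ, Nat.cast_mul]
  have hΓs := Real.Gamma_pos_of_pos hs
  have hΓ3 := Real.Gamma_pos_of_pos (show (0:ℝ) < (ν+3)/2 by linarith)
  have hΓk1 := Real.Gamma_pos_of_pos (show (0:ℝ) < (k:ℝ) + (ν/2+1) by positivity)
  have hfk : (0:ℝ) < (Nat.factorial k : ℝ) := by positivity
  have hwn : (0:ℝ) < w ^ k := by positivity
  have hw3 : (0:ℝ) < w ^ ((ν+3)/2) := Real.rpow_pos_of_pos hw _
  have h1rs : (0:ℝ) < (1-r) ^ (ν/2) := Real.rpow_pos_of_pos h1r _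
  push_cast
  field_simp

/-- CLEM E-step, expectation of the latent negative binomial variable
(numerator of `τ`). -/
theorem clem_tau (ν σ r μ₁ μ₂ : ℝ) (hν : 0 < ν) (hσ : 0 < σ)
    (hr : r ∈ Set.Ioo (0 : ℝ) 1) (y₁ y₂ : ℝ) :
    (∑' u : ℕ, (u : ℝ) * nbinomPmf (ν / 2) r u *
        (∫ z in Set.Ioi (0 : ℝ),
          normCond σ μ₁ y₁ z * gammaPdf (ν / (2 * (1 - r))) (ν / 2 + u) z) *
        (∫ z in Set.Ioi (0 : ℝ),
          normCond σ μ₂ y₂ z * gammaPdf (ν / (2 * (1 - r))) (ν / 2 + u) z))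
      = 2 * r * (1 - r) ^ (ν / 2 + 1) * Real.Gamma ((ν + 3) / 2) ^ 2 /
          (Real.pi * ν ^ 2 * σ ^ 2 * Real.Gamma (ν / 2) ^ 2) *
          hyp2F1 ((ν + 3) / 2) ((ν + 3) / 2) (ν / 2 + 1)
            (r / ((1 + (1 - r) * (y₁ - μ₁) ^ 2 / (ν * σ ^ 2)) *
              (1 + (1 - r) * (y₂ - μ₂) ^ 2 / (ν * σ ^ 2)))) /
          ((1 + (1 - r) * (y₁ - μ₁) ^ 2 / (ν * σ ^ 2)) *
            (1 + (1 - r) * (y₂ - μ₂) ^ 2 / (ν * σ ^ 2))) ^ ((ν + 3) / 2) := by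
  obtain ⟨hr0, hr1⟩ := hr
  have hcongr : (∑' u : ℕ, (u : ℝ) * nbinomPmf (ν / 2) r u *
        (∫ z in Set.Ioi (0 : ℝ),
          normCond σ μ₁ y₁ z * gammaPdf (ν / (2 * (1 - r))) (ν / 2 + u) z) *
        (∫ z in Set.Ioi (0 : ℝ),
          normCond σ μ₂ y₂ z * gammaPdf (ν / (2 * (1 - r))) (ν / 2 + u) z))
      = ∑' u : ℕ, (fun u : ℕ => (u : ℝ) * nbinomPmf (ν / 2) r u *
          ((1 - r) * Real.Gamma (ν / 2 + (u:ℝ) + 1/2) ^ 2 /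
            (Real.pi * ν * σ ^ 2 * Real.Gamma (ν / 2 + (u:ℝ)) ^ 2 *
              ((1 + (1 - r) * (y₁ - μ₁) ^ 2 / (ν * σ ^ 2)) *
                (1 + (1 - r) * (y₂ - μ₂) ^ 2 / (ν * σ ^ 2))) ^ (ν / 2 + (u:ℝ) + 1/2)))) u := by
    refine tsum_congr fun u => ?_
    rw [mul_assoc, prod_aux ν σ r hν hσ hr1 y₁ μ₁ y₂ μ₂ u]
  rw [hcongr, tsum_shift (by simp)]
  rw [hyp2F1, ← tsum_mul_left, ← tsum_div_const]
  refine tsum_congr fun k => ?_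
  have h1r : 0 < 1 - r := by linarith
  exact term_aux ν σ r _ hν hσ hr0 hr1
    (by positivity) k
end
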